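/- Under the same setup, if |ν̂'''(s)|s + 9|ν̂''(s)| + 12|ν̂'(s)|/s ≤ c₈ for all s > 0, then |S_{φ₂}(ψ) − S_{φ₁}(ψ)| ≤ c₈ |φ₂ − φ₁| |ψ|² for all φ₁, φ₂, ψ ∈ ℝ². -/

import Mathlib

/-!
Write `T x = ν(‖x‖) x` and `r = ‖x‖`. Away from the origin the derivatives of `T` are explicit:
`DT(x) h = (ν'(r)/r) ⟪x, h⟫ x + ν(r) h`, and each further derivative only brings in the next
coefficient `coeffₖ₊₁ = coeffₖ' / r` (starting from `coeff₁ = ν'/r`). The hypothesis on `c₈`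
bounds the resulting third derivative by `c₈`, and the second derivative by `c₈ ‖x‖`; the latter
lets a segment through the origin be split there, so `D²T` is `c₈`-Lipschitz on the whole plane.
At the origin `T` and `DT` are differentiable because `|ν'(r)| / r` is bounded.

With `δ = φ₂ - φ₁`, the function `s ↦ T(φ₂ + sψ) - T(φ₁ + sψ) - s (DT(φ₂) - DT(φ₁)) ψ` goes from
`0` to `S_{φ₂}(ψ) - S_{φ₁}(ψ)` on `[0, 1]`, and its derivative is the mixed difference
`(DT(φ₂ + sψ) - DT(φ₂) - DT(φ₁ + sψ) + DT(φ₁)) ψ`. By a second mean value inequality, in the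
direction `δ`, this is at most `c₈ ‖sψ‖ ‖δ‖ ‖ψ‖`.
-/

noncomputable section

/-- `T(W) = ν̂(|W|)W` on `ℝ²`. -/
def Tmap (ν : ℝ → ℝ) (W : EuclideanSpace ℝ (Fin 2)) : EuclideanSpace ℝ (Fin 2) :=
  ν ‖W‖ • W

/-- `S_φ(ψ) = T(φ+ψ) − T(φ) − DT(φ)ψ`. -/
def Smap (ν : ℝ → ℝ) (φ ψ : EuclideanSpace ℝ (Fin 2)) : EuclideanSpace ℝ (Fin 2) :=
  Tmap ν (φ + ψ) - Tmap ν φ - fderiv ℝ (Tmap ν) φ ψ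

open Set Topology
open scoped RealInnerProductSpace

section NormedSpace

variable {E F : Type*} [NormedAddCommGroup E] [NormedSpace ℝ E]
  [NormedAddCommGroup F] [NormedSpace ℝ F]

theorem hasDerivAt_line (a v : E) (s : ℝ) : HasDerivAt (fun s : ℝ => a + s • v) v s := by
  simpa using ((hasDerivAt_id s).smul_const v).const_add a

theorem hasFDerivAt_of_norm_le_pow {f : E → F} {f' : E →L[ℝ] F} {x : E} {C : ℝ} {n : ℕ}
    (hn : 1 < n) (h : ∀ y, ‖f y - f x - f' (y - x)‖ ≤ C * ‖y - x‖ ^ n) :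
    HasFDerivAt f f' x := by
  rw [hasFDerivAt_iff_isLittleO_nhds_zero]
  refine (Asymptotics.isBigO_of_le' (𝓝 0) (c := C) fun z => ?_).trans_isLittleO
    (Asymptotics.isLittleO_norm_pow_id hn)
  simpa using h (x + z)

theorem norm_mixed_difference_le {g : E → F} {B : E → E → F} {K : ℝ}
    (hg : ∀ (p : ℝ → E) (v : E) (t : ℝ), HasDerivAt p v t →
      HasDerivAt (fun s => g (p s)) (B (p t) v) t)
    (hB : ∀ x y v, ‖B x v - B y v‖ ≤ K * ‖x - y‖ * ‖v‖) (x y z : E) :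
    ‖g (y + z) - g y - (g (x + z) - g x)‖ ≤ K * ‖z‖ * ‖y - x‖ := by
  have hline : ∀ u : ℝ, HasDerivAt (fun u : ℝ => x + u • (y - x) + z) (y - x) u := fun u => by
    simpa only [add_right_comm] using hasDerivAt_line (x + z) (y - x) u
  simpa using norm_image_sub_le_of_norm_deriv_le_segment_01'
    (f := fun u : ℝ => g (x + u • (y - x) + z) - g (x + u • (y - x)))
    (fun u _ => ((hg _ _ u (hline u)).sub (hg _ _ u (hasDerivAt_line x _ u))).hasDerivWithinAt)
    (fun u _ => by simpa using hB (x + u • (y - x) + z) (x + u • (y - x)) (y - x))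

theorem norm_taylorRemainder_sub_le {f : E → F} {f' : E → E →L[ℝ] F} {B : E → E → E → F}
    {K : ℝ} (hK : 0 ≤ K) (hf : ∀ x, HasFDerivAt f (f' x) x)
    (hf' : ∀ w (p : ℝ → E) (v : E) (t : ℝ), HasDerivAt p v t →
      HasDerivAt (fun s => f' (p s) w) (B (p t) v w) t)
    (hB : ∀ x y v w, ‖B x v w - B y v w‖ ≤ K * ‖x - y‖ * ‖v‖ * ‖w‖) (φ₁ φ₂ ψ : E) :
    ‖(f (φ₂ + ψ) - f φ₂ - f' φ₂ ψ) - (f (φ₁ + ψ) - f φ₁ - f' φ₁ ψ)‖ ≤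
      K * ‖φ₂ - φ₁‖ * ‖ψ‖ ^ 2 := by
  have hmixed : ∀ s ∈ Ico (0 : ℝ) 1, ‖f' (φ₂ + s • ψ) ψ - f' φ₂ ψ -
      (f' (φ₁ + s • ψ) ψ - f' φ₁ ψ)‖ ≤ K * ‖φ₂ - φ₁‖ * ‖ψ‖ ^ 2 := fun s hs => by
    refine (norm_mixed_difference_le (g := fun x => f' x ψ) (K := K * ‖ψ‖) (hf' ψ)
      (fun x y v => (hB x y v ψ).trans_eq (by ring)) φ₁ φ₂ (s • ψ)).trans ?_
    rw [norm_smul, Real.norm_of_nonneg hs.1]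
    have : s * ‖ψ‖ ≤ ‖ψ‖ := mul_le_of_le_one_left (norm_nonneg ψ) hs.2.le
    calc K * ‖ψ‖ * (s * ‖ψ‖) * ‖φ₂ - φ₁‖ ≤ K * ‖ψ‖ * ‖ψ‖ * ‖φ₂ - φ₁‖ := by gcongr
      _ = K * ‖φ₂ - φ₁‖ * ‖ψ‖ ^ 2 := by ring
  have key := norm_image_sub_le_of_norm_deriv_le_segment_01'
    (f := fun s : ℝ => f (φ₂ + s • ψ) - f (φ₁ + s • ψ) - s • (f' φ₂ ψ - f' φ₁ ψ))
    (fun s _ => ((((hf _).comp_hasDerivAt s (hasDerivAt_line φ₂ ψ s)).sub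
      ((hf _).comp_hasDerivAt s (hasDerivAt_line φ₁ ψ s))).sub
        ((hasDerivAt_id s).smul_const (f' φ₂ ψ - f' φ₁ ψ))).hasDerivWithinAt)
    (fun s hs => by simpa [sub_sub_sub_comm] using hmixed s hs)
  convert key using 2
  simp only [one_smul, zero_smul, add_zero, sub_zero]
  abel

theorem norm_sub_le_of_hasDerivAt_off_zero {g : E → F} {D : E → E → F} {C : ℝ}
    (hg : ∀ (p : ℝ → E) (v : E) (t : ℝ), HasDerivAt p v t → p t ≠ 0 →
      HasDerivAt (fun s => g (p s)) (D (p t) v) t)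
    (hD : ∀ x v, x ≠ 0 → ‖D x v‖ ≤ C * ‖v‖) (hg₀ : ∀ x, ‖g x‖ ≤ C * ‖x‖) (x y : E) :
    ‖g x - g y‖ ≤ C * ‖x - y‖ := by
  by_cases hseg : ∀ s ∈ Icc (0 : ℝ) 1, y + s • (x - y) ≠ 0
  · simpa using norm_image_sub_le_of_norm_deriv_le_segment_01'
      (fun s hs => (hg _ _ s (hasDerivAt_line y (x - y) s) (hseg s hs)).hasDerivWithinAt)
      (fun s hs => hD _ _ (hseg s (Ico_subset_Icc_self hs)))
  push Not at hseg
  obtain ⟨s, hs, hzero⟩ := hseg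
  have hy : -y = s • (x - y) := neg_eq_of_add_eq_zero_right hzero
  have hx : x = (1 - s) • (x - y) := by
    rw [sub_smul, one_smul, ← hy, sub_neg_eq_add, sub_add_cancel]
  have hny : ‖y‖ = s * ‖x - y‖ := by rw [← norm_neg, hy, norm_smul_of_nonneg hs.1]
  have hnx : ‖x‖ = (1 - s) * ‖x - y‖ := by
    rw [← norm_smul_of_nonneg (sub_nonneg.2 hs.2), ← hx]
  calc ‖g x - g y‖ ≤ C * ‖x‖ + C * ‖y‖ := (norm_sub_le _ _).trans (add_le_add (hg₀ x) (hg₀ y))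
    _ = C * ‖x - y‖ := by rw [hnx, hny]; ring

end NormedSpace

section InnerProductSpace

variable {E : Type*} [NormedAddCommGroup E] [InnerProductSpace ℝ E]

theorem norm_inner_smul_le (a b c : E) : ‖⟪a, b⟫ • c‖ ≤ ‖a‖ * ‖b‖ * ‖c‖ := by
  rw [norm_smul, Real.norm_eq_abs]
  gcongr
  exact abs_real_inner_le_norm a b

theorem hasFDerivAt_norm_of_ne_zero {x : E} (hx : x ≠ 0) :
    HasFDerivAt (‖·‖) (‖x‖⁻¹ • innerSL ℝ x) x := by
  convert (hasStrictFDerivAt_norm_sq x).hasFDerivAt.sqrt (by positivity) using 1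
  · simp only [Real.sqrt_sq (norm_nonneg _)]
  · ext y
    simp only [smul_apply, coe_innerSL_apply, smul_eq_mul, Real.sqrt_sq (norm_nonneg _),
      nsmul_eq_mul, Nat.cast_ofNat]
    field_simp

theorem hasFDerivAt_comp_norm {c : ℝ → ℝ} {c' : ℝ} {x : E}
    (hc : HasDerivAt c (‖x‖ * c') ‖x‖) (hx : x ≠ 0) :
    HasFDerivAt (fun y => c ‖y‖) (c' • innerSL ℝ x) x := by
  refine (hc.comp_hasFDerivAt x (hasFDerivAt_norm_of_ne_zero hx)).congr_fderiv ?_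
  rw [smul_smul, mul_right_comm, mul_inv_cancel₀ (norm_ne_zero_iff.mpr hx), one_mul]

theorem HasDerivAt.comp_norm {c : ℝ → ℝ} {c' : ℝ} {p : ℝ → E} {v : E} {t : ℝ}
    (hc : HasDerivAt c (‖p t‖ * c') ‖p t‖) (hp : HasDerivAt p v t) (h0 : p t ≠ 0) :
    HasDerivAt (fun s => c ‖p s‖) (c' * ⟪p t, v⟫) t := by
  have := (hasFDerivAt_comp_norm hc h0).comp_hasDerivAt t hp
  simp only [smul_apply, coe_innerSL_apply, smul_eq_mul] at this
  exact this

theorem HasDerivAt.inner_const {p : ℝ → E} {v : E} {t : ℝ} (hp : HasDerivAt p v t) (w : E) :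
    HasDerivAt (fun s => ⟪p s, w⟫) ⟪v, w⟫ t := by
  simpa using hp.inner ℝ (hasDerivAt_const t w)

end InnerProductSpace

namespace Radial

/- `coeff₂ = coeff₁' / r` and `coeff₃ = coeff₂' / r` (`hasDerivAt_coeff₁`, `hasDerivAt_coeff₂`);
at `r = 0` all three are `0` by the convention `x / 0 = 0`. -/
def coeff₁ (ν : ℝ → ℝ) (r : ℝ) : ℝ := deriv ν r / r

def coeff₂ (ν : ℝ → ℝ) (r : ℝ) : ℝ := (deriv (deriv ν) r - deriv ν r / r) / r ^ 2

def coeff₃ (ν : ℝ → ℝ) (r : ℝ) : ℝ :=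
  (deriv (deriv (deriv ν)) r - 3 * deriv (deriv ν) r / r + 3 * deriv ν r / r ^ 2) / r ^ 3

variable {ν : ℝ → ℝ} {r C : ℝ}

theorem hasDerivAt_mul_coeff₁ (hν : DifferentiableAt ℝ ν r) (hr : r ≠ 0) :
    HasDerivAt ν (r * coeff₁ ν r) r := by
  rw [coeff₁, mul_div_cancel₀ _ hr]
  exact hν.hasDerivAt

theorem hasDerivAt_coeff₁ (hν₁ : DifferentiableAt ℝ (deriv ν) r) (hr : r ≠ 0) :
    HasDerivAt (coeff₁ ν) (r * coeff₂ ν r) r := by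
  refine (hν₁.hasDerivAt.div (hasDerivAt_id' r) hr).congr_deriv ?_
  rw [coeff₂]
  field_simp

theorem hasDerivAt_coeff₂ (hν₁ : DifferentiableAt ℝ (deriv ν) r)
    (hν₂ : DifferentiableAt ℝ (deriv (deriv ν)) r) (hr : r ≠ 0) :
    HasDerivAt (coeff₂ ν) (r * coeff₃ ν r) r := by
  refine ((hν₂.hasDerivAt.sub (hν₁.hasDerivAt.div (hasDerivAt_id' r) hr)).div
    (hasDerivAt_pow 2 r) (pow_ne_zero 2 hr)).congr_deriv ?_
  simp only [coeff₃, Pi.sub_apply, Pi.div_apply]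
  field_simp
  ring

theorem abs_coeff₁_of_pos (hr : 0 < r) : |coeff₁ ν r| = |deriv ν r| / r := by
  rw [coeff₁, abs_div, abs_of_pos hr]

theorem abs_coeff₁_le (hν : ∀ s > 0, |deriv ν s| / s ≤ C) (hr : 0 ≤ r) : |coeff₁ ν r| ≤ C := by
  rcases hr.eq_or_lt with rfl | hr
  · have h₁ := hν 1 one_pos
    rw [div_one] at h₁
    simpa [coeff₁] using (abs_nonneg _).trans h₁
  · exact (abs_coeff₁_of_pos hr).trans_le (hν r hr)

theorem abs_sub_le_of_abs_coeff₁_le (hν : Differentiable ℝ ν) (hC : ∀ s ≥ 0, |coeff₁ ν s| ≤ C)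
    (hr : 0 ≤ r) : |ν r - ν 0| ≤ C * r ^ 2 := by
  rcases hr.eq_or_lt with rfl | hr
  · simp
  obtain ⟨s, hs, hslope⟩ := exists_hasDerivAt_eq_slope ν (fun s => s * coeff₁ ν s) hr
    hν.continuous.continuousOn (fun s hs => hasDerivAt_mul_coeff₁ (hν s) hs.1.ne')
  rw [sub_zero, eq_div_iff hr.ne'] at hslope
  rw [← hslope, abs_mul, abs_mul, abs_of_pos hs.1, abs_of_pos hr]
  have hC₀ : 0 ≤ C := (abs_nonneg _).trans (hC 0 le_rfl)
  calc s * |coeff₁ ν s| * r ≤ r * C * r := by gcongr; exacts [hs.2.le, hC s hs.1.le]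
    _ = C * r ^ 2 := by ring

theorem sq_mul_abs_coeff₂_le (hr : 0 < r) :
    r ^ 2 * |coeff₂ ν r| ≤ |deriv (deriv ν) r| + |deriv ν r| / r := by
  rw [← abs_of_pos (pow_pos hr 2), ← abs_mul, coeff₂,
    mul_div_cancel₀ _ (pow_ne_zero 2 hr.ne'), ← abs_of_pos hr, ← abs_div, abs_of_pos hr]
  exact abs_sub _ _

theorem pow_four_mul_abs_coeff₃_le (hr : 0 < r) :
    r ^ 4 * |coeff₃ ν r| ≤
      |deriv (deriv (deriv ν)) r| * r + 3 * |deriv (deriv ν) r| + 3 * (|deriv ν r| / r) := by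
  have e : r ^ 4 * coeff₃ ν r =
      deriv (deriv (deriv ν)) r * r - 3 * deriv (deriv ν) r + 3 * (deriv ν r / r) := by
    rw [coeff₃]; field_simp
  rw [← abs_of_pos (pow_pos hr 4), ← abs_mul, e]
  refine (abs_add_le _ _).trans (add_le_add ((abs_sub _ _).trans_eq ?_) ?_) <;>
    simp [abs_mul, abs_div, abs_of_pos hr]

variable {E : Type*} [NormedAddCommGroup E] [InnerProductSpace ℝ E]

def symmTriple (x a b : E) : E := ⟪a, b⟫ • x + ⟪x, b⟫ • a + ⟪x, a⟫ • b

theorem norm_symmTriple_le (x a b : E) : ‖symmTriple x a b‖ ≤ 3 * (‖x‖ * ‖a‖ * ‖b‖) := by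
  refine norm_add₃_le.trans ?_
  linarith [norm_inner_smul_le a b x, norm_inner_smul_le x b a, norm_inner_smul_le x a b,
    show ‖a‖ * ‖b‖ * ‖x‖ = ‖x‖ * ‖a‖ * ‖b‖ by ring, show ‖x‖ * ‖b‖ * ‖a‖ = ‖x‖ * ‖a‖ * ‖b‖ by ring]

theorem hasDerivAt_symmTriple {p : ℝ → E} {v : E} {t : ℝ} (hp : HasDerivAt p v t) (a b : E) :
    HasDerivAt (fun s => symmTriple (p s) a b) (symmTriple v a b) t :=
  ((hp.const_smul ⟪a, b⟫).add ((hp.inner_const b).smul_const a)).add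
    ((hp.inner_const a).smul_const b)

variable (ν) in
def firstDeriv (x : E) : E →L[ℝ] E :=
  coeff₁ ν ‖x‖ • (innerSL ℝ x).smulRight x + ν ‖x‖ • ContinuousLinearMap.id ℝ E

variable (ν) in
def secondDeriv (x a b : E) : E :=
  (coeff₂ ν ‖x‖ * ⟪x, a⟫ * ⟪x, b⟫) • x + coeff₁ ν ‖x‖ • symmTriple x a b

variable (ν) in
def thirdDeriv (x d a b : E) : E :=
  (coeff₃ ν ‖x‖ * ⟪x, d⟫ * ⟪x, a⟫ * ⟪x, b⟫) • x
    + coeff₂ ν ‖x‖ • ((⟪d, a⟫ * ⟪x, b⟫ + ⟪x, a⟫ * ⟪d, b⟫) • x + (⟪x, a⟫ * ⟪x, b⟫) • d)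
    + (coeff₂ ν ‖x‖ * ⟪x, d⟫) • symmTriple x a b + coeff₁ ν ‖x‖ • symmTriple d a b

theorem firstDeriv_apply (x h : E) :
    firstDeriv ν x h = (coeff₁ ν ‖x‖ * ⟪x, h⟫) • x + ν ‖x‖ • h := by
  simp [firstDeriv, smul_smul]

@[simp]
theorem secondDeriv_zero (a b : E) : secondDeriv ν 0 a b = 0 := by
  simp [secondDeriv, symmTriple]

theorem hasFDerivAt_smul_self (hν : Differentiable ℝ ν) (hC : ∀ r ≥ 0, |coeff₁ ν r| ≤ C)
    (x : E) : HasFDerivAt (fun y : E => ν ‖y‖ • y) (firstDeriv ν x) x := by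
  rcases eq_or_ne x 0 with rfl | hx
  · refine hasFDerivAt_of_norm_le_pow (n := 3) (by norm_num) (C := C) fun y => ?_
    rw [firstDeriv_apply, norm_zero, sub_zero, smul_zero, sub_zero, inner_zero_left, mul_zero,
      zero_smul, zero_add, ← sub_smul, norm_smul, Real.norm_eq_abs, pow_succ, ← mul_assoc]
    have hC₀ : 0 ≤ C := (abs_nonneg _).trans (hC 0 le_rfl)
    gcongr
    exact abs_sub_le_of_abs_coeff₁_le hν hC (norm_nonneg y)
  · refine ((hasFDerivAt_comp_norm (hasDerivAt_mul_coeff₁ (hν _) (norm_ne_zero_iff.mpr hx)) hx).smul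
      (hasFDerivAt_id x)).congr_fderiv ?_
    ext h
    simp [firstDeriv_apply, add_comm]

theorem hasFDerivAt_firstDeriv_apply_zero (hν : Differentiable ℝ ν)
    (hC : ∀ r ≥ 0, |coeff₁ ν r| ≤ C) (w : E) :
    HasFDerivAt (fun y => firstDeriv ν y w) (0 : E →L[ℝ] E) 0 := by
  refine hasFDerivAt_of_norm_le_pow one_lt_two (C := 2 * C * ‖w‖) fun y => ?_
  have h₁ : ‖(coeff₁ ν ‖y‖ * ⟪y, w⟫) • y‖ ≤ C * ‖y‖ ^ 2 * ‖w‖ := by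
    rw [norm_smul, norm_mul, Real.norm_eq_abs, Real.norm_eq_abs]
    calc |coeff₁ ν ‖y‖| * |⟪y, w⟫| * ‖y‖ ≤ C * (‖y‖ * ‖w‖) * ‖y‖ := by
          gcongr
          · exact (abs_nonneg _).trans (hC _ (norm_nonneg y))
          · exact hC _ (norm_nonneg y)
          · exact abs_real_inner_le_norm y w
      _ = C * ‖y‖ ^ 2 * ‖w‖ := by ring
  have h₂ : ‖(ν ‖y‖ - ν 0) • w‖ ≤ C * ‖y‖ ^ 2 * ‖w‖ := by
    rw [norm_smul, Real.norm_eq_abs]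
    gcongr
    exact abs_sub_le_of_abs_coeff₁_le hν hC (norm_nonneg y)
  have e : firstDeriv ν y w - firstDeriv ν 0 w - (0 : E →L[ℝ] E) (y - 0) =
      (coeff₁ ν ‖y‖ * ⟪y, w⟫) • y + (ν ‖y‖ - ν 0) • w := by
    simp only [firstDeriv_apply, sub_smul, norm_zero, inner_zero_left, mul_zero, smul_zero,
      zero_add, zero_apply, sub_zero]
    abel
  rw [e, sub_zero]
  linarith [norm_add_le ((coeff₁ ν ‖y‖ * ⟪y, w⟫) • y) ((ν ‖y‖ - ν 0) • w)]

theorem hasDerivAt_firstDeriv_apply (hν : Differentiable ℝ ν)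
    (hν₁ : Differentiable ℝ (deriv ν)) (hC : ∀ r ≥ 0, |coeff₁ ν r| ≤ C)
    {p : ℝ → E} {v : E} {t : ℝ} (hp : HasDerivAt p v t) (w : E) :
    HasDerivAt (fun s => firstDeriv ν (p s) w) (secondDeriv ν (p t) v w) t := by
  rcases eq_or_ne (p t) 0 with h0 | h0
  · have h := hasFDerivAt_firstDeriv_apply_zero hν hC w
    rw [← h0] at h
    exact (h.comp_hasDerivAt t hp).congr_deriv (by simp [h0])
  have hr : ‖p t‖ ≠ 0 := norm_ne_zero_iff.mpr h0
  have hc₁ := (hasDerivAt_coeff₁ (hν₁ _) hr).comp_norm hp h0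
  have hν' := (hasDerivAt_mul_coeff₁ (hν _) hr).comp_norm hp h0
  simp only [firstDeriv_apply]
  refine (((hc₁.mul (hp.inner_const w)).smul hp).add (hν'.smul_const w)).congr_deriv ?_
  simp only [secondDeriv, symmTriple, Pi.mul_apply]
  module

theorem hasDerivAt_secondDeriv_apply (hν₁ : Differentiable ℝ (deriv ν))
    (hν₂ : Differentiable ℝ (deriv (deriv ν)))
    {p : ℝ → E} {v : E} {t : ℝ} (hp : HasDerivAt p v t) (h0 : p t ≠ 0) (a b : E) :
    HasDerivAt (fun s => secondDeriv ν (p s) a b) (thirdDeriv ν (p t) v a b) t := by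
  have hr : ‖p t‖ ≠ 0 := norm_ne_zero_iff.mpr h0
  have hc₁ := (hasDerivAt_coeff₁ (hν₁ _) hr).comp_norm hp h0
  have hc₂ := (hasDerivAt_coeff₂ (hν₁ _) (hν₂ _) hr).comp_norm hp h0
  refine ((((hc₂.mul (hp.inner_const a)).mul (hp.inner_const b)).smul hp).add
    (hc₁.smul (hasDerivAt_symmTriple hp a b))).congr_deriv ?_
  simp only [thirdDeriv, Pi.mul_apply]
  module

theorem norm_secondDeriv_le (x a b : E) :
    ‖secondDeriv ν x a b‖ ≤
      (‖x‖ ^ 2 * |coeff₂ ν ‖x‖| + 3 * |coeff₁ ν ‖x‖|) * (‖x‖ * ‖a‖ * ‖b‖) := by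
  have h₁ : ‖(coeff₂ ν ‖x‖ * ⟪x, a⟫ * ⟪x, b⟫) • x‖ ≤
      |coeff₂ ν ‖x‖| * (‖x‖ * ‖a‖) * (‖x‖ * ‖b‖) * ‖x‖ := by
    simp only [norm_smul, norm_mul, Real.norm_eq_abs]
    gcongr <;> exact abs_real_inner_le_norm _ _
  have h₂ : ‖coeff₁ ν ‖x‖ • symmTriple x a b‖ ≤ |coeff₁ ν ‖x‖| * (3 * (‖x‖ * ‖a‖ * ‖b‖)) := by
    rw [norm_smul, Real.norm_eq_abs]
    gcongr
    exact norm_symmTriple_le x a b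
  calc _ ≤ _ := norm_add_le _ _
    _ ≤ _ := add_le_add h₁ h₂
    _ = _ := by ring

theorem norm_thirdDeriv_le (x d a b : E) :
    ‖thirdDeriv ν x d a b‖ ≤ (‖x‖ ^ 4 * |coeff₃ ν ‖x‖| + 6 * (‖x‖ ^ 2 * |coeff₂ ν ‖x‖|)
      + 3 * |coeff₁ ν ‖x‖|) * (‖d‖ * ‖a‖ * ‖b‖) := by
  have h₁ : ‖(coeff₃ ν ‖x‖ * ⟪x, d⟫ * ⟪x, a⟫ * ⟪x, b⟫) • x‖ ≤
      |coeff₃ ν ‖x‖| * (‖x‖ * ‖d‖) * (‖x‖ * ‖a‖) * (‖x‖ * ‖b‖) * ‖x‖ := by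
    simp only [norm_smul, norm_mul, Real.norm_eq_abs]
    gcongr <;> exact abs_real_inner_le_norm _ _
  have h₂ : ‖coeff₂ ν ‖x‖ • ((⟪d, a⟫ * ⟪x, b⟫ + ⟪x, a⟫ * ⟪d, b⟫) • x + (⟪x, a⟫ * ⟪x, b⟫) • d)‖ ≤
      |coeff₂ ν ‖x‖| * (((‖d‖ * ‖a‖) * (‖x‖ * ‖b‖) + (‖x‖ * ‖a‖) * (‖d‖ * ‖b‖)) * ‖x‖
        + (‖x‖ * ‖a‖) * (‖x‖ * ‖b‖) * ‖d‖) := by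
    rw [norm_smul, Real.norm_eq_abs]
    gcongr
    refine (norm_add_le _ _).trans (add_le_add ?_ ?_) <;>
      simp only [norm_smul, norm_mul, Real.norm_eq_abs]
    · gcongr
      refine (abs_add_le _ _).trans (add_le_add ?_ ?_) <;>
        simp only [abs_mul] <;> gcongr <;> exact abs_real_inner_le_norm _ _
    · gcongr <;> exact abs_real_inner_le_norm _ _
  have h₃ : ‖(coeff₂ ν ‖x‖ * ⟪x, d⟫) • symmTriple x a b‖ ≤
      |coeff₂ ν ‖x‖| * (‖x‖ * ‖d‖) * (3 * (‖x‖ * ‖a‖ * ‖b‖)) := by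
    simp only [norm_smul, norm_mul, Real.norm_eq_abs]
    gcongr
    · exact abs_real_inner_le_norm _ _
    · exact norm_symmTriple_le x a b
  have h₄ : ‖coeff₁ ν ‖x‖ • symmTriple d a b‖ ≤ |coeff₁ ν ‖x‖| * (3 * (‖d‖ * ‖a‖ * ‖b‖)) := by
    rw [norm_smul, Real.norm_eq_abs]
    gcongr
    exact norm_symmTriple_le d a b
  calc _ ≤ _ := norm_add₄_le
    _ ≤ _ := add_le_add (add_le_add (add_le_add h₁ h₂) h₃) h₄
    _ = _ := by ring

theorem norm_secondDeriv_sub_le {c : ℝ} (hν₁ : Differentiable ℝ (deriv ν))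
    (hν₂ : Differentiable ℝ (deriv (deriv ν)))
    (hc : ∀ r > 0, |deriv (deriv (deriv ν)) r| * r + 9 * |deriv (deriv ν) r| +
      12 * |deriv ν r| / r ≤ c) (x y a b : E) :
    ‖secondDeriv ν x a b - secondDeriv ν y a b‖ ≤ c * ‖x - y‖ * ‖a‖ * ‖b‖ := by
  have hcoeff : ∀ z : E, z ≠ 0 → ‖z‖ ^ 4 * |coeff₃ ν ‖z‖| + 6 * (‖z‖ ^ 2 * |coeff₂ ν ‖z‖|) +
      3 * |coeff₁ ν ‖z‖| ≤ c ∧ ‖z‖ ^ 2 * |coeff₂ ν ‖z‖| + 3 * |coeff₁ ν ‖z‖| ≤ c := by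
    intro z hz
    have hr := norm_pos_iff.2 hz
    have := hc _ hr
    rw [mul_div_assoc] at this
    have := abs_coeff₁_of_pos (ν := ν) hr
    have := sq_mul_abs_coeff₂_le (ν := ν) hr
    have := pow_four_mul_abs_coeff₃_le (ν := ν) hr
    have : 0 ≤ |deriv (deriv (deriv ν)) ‖z‖| * ‖z‖ := by positivity
    have : 0 ≤ |deriv ν ‖z‖| / ‖z‖ := by positivity
    constructor <;> linarith [abs_nonneg (deriv (deriv ν) ‖z‖)]
  refine (norm_sub_le_of_hasDerivAt_off_zero (C := c * ‖a‖ * ‖b‖)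
    (g := fun z => secondDeriv ν z a b) (D := fun z v => thirdDeriv ν z v a b)
    (fun p v t hp h0 => hasDerivAt_secondDeriv_apply hν₁ hν₂ hp h0 a b)
    (fun z v hz => (norm_thirdDeriv_le z v a b).trans ?_) (fun z => ?_) x y).trans_eq (by ring)
  · calc _ ≤ c * (‖v‖ * ‖a‖ * ‖b‖) := by gcongr; exact (hcoeff z hz).1
      _ = _ := by ring
  · rcases eq_or_ne z 0 with rfl | hz
    · simp
    calc _ ≤ _ := norm_secondDeriv_le z a b
      _ ≤ c * (‖z‖ * ‖a‖ * ‖b‖) := by gcongr; exact (hcoeff z hz).2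
      _ = _ := by ring

end Radial

theorem S_diff_first_arg (ν : ℝ → ℝ) (ctil c₈ : ℝ)
    (hC3 : ContDiff ℝ 3 ν)
    (hb : ∀ s > (0:ℝ), |deriv ν s| / s ≤ ctil)
    (hc8 : 0 ≤ c₈)
    (h8 : ∀ s > (0:ℝ),
      |deriv (deriv (deriv ν)) s| * s + 9 * |deriv (deriv ν) s| + 12 * |deriv ν s| / s ≤ c₈) :
    ∀ φ₁ φ₂ ψ : EuclideanSpace ℝ (Fin 2),
      ‖Smap ν φ₂ ψ - Smap ν φ₁ ψ‖ ≤ c₈ * ‖φ₂ - φ₁‖ * ‖ψ‖ ^ 2 := by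
  intro φ₁ φ₂ ψ
  have hν : Differentiable ℝ ν := hC3.differentiable (by norm_num)
  have hν₁ : Differentiable ℝ (deriv ν) := by
    simpa [iteratedDeriv_succ] using hC3.differentiable_iteratedDeriv 1 (by norm_num)
  have hν₂ : Differentiable ℝ (deriv (deriv ν)) := by
    simpa [iteratedDeriv_succ] using hC3.differentiable_iteratedDeriv 2 (by norm_num)
  have hcoeff : ∀ r ≥ 0, |Radial.coeff₁ ν r| ≤ ctil := fun r hr => Radial.abs_coeff₁_le hb hr
  have hT : ∀ x, HasFDerivAt (Tmap ν) (Radial.firstDeriv ν x) x :=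
    Radial.hasFDerivAt_smul_self hν hcoeff
  simp only [Smap, (hT _).fderiv]
  exact norm_taylorRemainder_sub_le hc8 hT
    (fun w _ _ _ hp => Radial.hasDerivAt_firstDeriv_apply hν hν₁ hcoeff hp w)
    (Radial.norm_secondDeriv_sub_le hν₁ hν₂ h8) φ₁ φ₂ ψ

end
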